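/- There exist constants c₁ > 0 and c₂ > 0 such that for every ω ∈ ℝ, every λ ∈ ℝ and every integer n ≥ 1, if α_0, α_2, …, α_{2n} are real numbers satisfying P_n(λ') = ∑_{k=0}^{n} α_{2k} (λ')^{2k} for all λ' ∈ ℝ, then α_{2n} ≥ c₁ⁿ and α_{2n−2} ≥ c₂ⁿ. -/

import Mathlib

open MeasureTheory Real
open scoped Matrix

/-- The skew-shift potential `v_j(x,y) = 2 cos(2π(j(j-1)/2·ω + j·y + x))`. -/
noncomputable def v (ω : ℝ) (j : ℕ) (x y : ℝ) : ℝ :=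
  2 * Real.cos (2 * Real.pi * ((j : ℝ) * ((j : ℝ) - 1) / 2 * ω + (j : ℝ) * y + x))

/-- The zero-energy transfer matrix `A_j(x,y)`. -/
noncomputable def A (ω lam : ℝ) (j : ℕ) (x y : ℝ) : Matrix (Fin 2) (Fin 2) ℝ :=
  !![-(lam * v ω j x y), -1; 1, 0]

/-- The transfer matrix products `M_n(x,y) = A_n(x,y) ⋯ A_1(x,y)`. -/
noncomputable def M (ω lam : ℝ) : ℕ → ℝ → ℝ → Matrix (Fin 2) (Fin 2) ℝ
  | 0, _, _ => 1
  | n + 1, x, y => A ω lam (n + 1) x y * M ω lam n x y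

/-- `P_n(λ) = ∫₀¹∫₀¹ Tr(M_n(x,y)ᵀ M_n(x,y)) dx dy`. -/
noncomputable def P (ω : ℝ) (n : ℕ) (lam : ℝ) : ℝ :=
  ∫ x in (0:ℝ)..1, ∫ y in (0:ℝ)..1,
    Matrix.trace ((M ω lam n x y)ᵀ * M ω lam n x y)

/-!
Treat `λ` as an indeterminate: `M_n` is the evaluation at `λ` of a product of polynomial
matrices whose `(0,0)` entry has degree `n` and leading coefficient `∏ j ≤ n, (-v_j)`, all
other entries having smaller degree. So the coefficient of `λ^{2n}` in `P_n` is
`∫∫ ∏ v_j²`. Writing `|2 cos θ| = |e^{2iθ} + 1|` and expanding the product, every nonempty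
subset of factors has the nonzero frequency `2 ∑ j` in `y`, so
`∫ |∏ v_j| dy ≥ |∫ ∏ (e^{…} + 1) dy| = 1`, and Cauchy–Schwarz gives
`∫ ∏ v_j² dy ≥ 1`.

Up to squares, the coefficient of `λ^{2n-2}` is `2 a_n b_n + a_{n-1}²`, where `a_n`, `b_n` are
the coefficients of `λ^n`, `λ^{n-2}` in the `(0,0)` entry of `M_n` and `a_{n-1}` is the top one
of `M_{n-1}`. The shift `y ↦ y + 1/2` multiplies `v_j` by `(-1)^j`, hence `a_n` and `b_n` by
opposite signs, so the cross term integrates to zero and `a_{n-1}²` is again bounded below by `1`.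
Both constants can therefore be taken to be `1`.
-/

open Polynomial

lemma coeff_sq_of_natDegree_le_add_two {R : Type*} [CommRing R] {p : R[X]} {d : ℕ}
    (hp : p.natDegree ≤ d + 2) :
    (p ^ 2).coeff (2 * (d + 1)) = 2 * (p.coeff (d + 2) * p.coeff d) + p.coeff (d + 1) ^ 2 := by
  rw [sq, coeff_mul, Finset.Nat.sum_antidiagonal_eq_sum_range_succ_mk]
  have hsub : ({d, d + 1, d + 2} : Finset ℕ) ⊆ Finset.range (2 * (d + 1) + 1) := by
    intro i hi
    simp only [Finset.mem_insert, Finset.mem_singleton] at hi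
    rw [Finset.mem_range]
    omega
  rw [← Finset.sum_subset hsub]
  · rw [Finset.sum_insert (by simp), Finset.sum_insert (by simp), Finset.sum_singleton,
      show 2 * (d + 1) - d = d + 2 by omega, show 2 * (d + 1) - (d + 1) = d + 1 by omega,
      show 2 * (d + 1) - (d + 2) = d by omega]
    ring
  · intro i _ hi
    simp only [Finset.mem_insert, Finset.mem_singleton, not_or] at hi
    rcases lt_or_ge i d with h | h
    · rw [coeff_eq_zero_of_natDegree_lt (p := p) (n := 2 * (d + 1) - i) (by omega), mul_zero]
    · rw [coeff_eq_zero_of_natDegree_lt (p := p) (n := i) (by omega), zero_mul]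

lemma Matrix.trace_transpose_mul_self {m n S : Type*} [Fintype m] [Fintype n] [Semiring S]
    (A : Matrix m n S) : (Aᵀ * A).trace = ∑ i, ∑ j, A i j ^ 2 := by
  simp only [Matrix.trace, Matrix.diag, Matrix.mul_apply, Matrix.transpose_apply, sq]
  exact Finset.sum_comm

lemma intervalIntegral_intervalIntegral_eval {F : ℝ → ℝ → ℝ[X]} {d : ℕ}
    (hF : ∀ k, Continuous fun p : ℝ × ℝ => (F p.1 p.2).coeff k)
    (hd : ∀ x y, (F x y).natDegree ≤ d) (a b a' b' t : ℝ) :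
    ∫ x in a..b, ∫ y in a'..b', (F x y).eval t
      = ∑ k ∈ Finset.range (d + 1),
          (∫ x in a..b, ∫ y in a'..b', (F x y).coeff k) * t ^ k := by
  have hinner (x : ℝ) : ∫ y in a'..b', (F x y).eval t
      = ∑ k ∈ Finset.range (d + 1), (∫ y in a'..b', (F x y).coeff k) * t ^ k := by
    have hy (k : ℕ) : Continuous fun y => (F x y).coeff k := (hF k).comp (.prodMk_right x)
    simp only [eval_eq_sum_range' (Nat.lt_succ_of_le (hd x _))]
    rw [intervalIntegral.integral_finsetSum fun k _ =>
      ((hy k).fun_mul continuous_const).intervalIntegrable _ _]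
    simp only [intervalIntegral.integral_mul_const]
  have hcont (k : ℕ) : Continuous fun x => ∫ y in a'..b', (F x y).coeff k :=
    intervalIntegral.continuous_parametric_intervalIntegral_of_continuous'
      (f := fun x y => (F x y).coeff k) (hF k) a' b'
  simp only [hinner]
  rw [intervalIntegral.integral_finsetSum fun k _ =>
    ((hcont k).fun_mul continuous_const).intervalIntegrable _ _]
  simp only [intervalIntegral.integral_mul_const]

lemma eq_of_forall_sum_mul_pow_two_mul_eq {R : Type*} [CommRing R] [IsDomain R]
    [Infinite R] {n : ℕ} {α γ : ℕ → R}
    (h : ∀ t : R, ∑ k ∈ Finset.range (n + 1), α k * t ^ (2 * k)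
      = ∑ k ∈ Finset.range (2 * n + 1), γ k * t ^ k) {k : ℕ} (hk : k ≤ n) :
    α k = γ (2 * k) := by
  have hpoly : ∑ i ∈ Finset.range (n + 1), C (α i) * X ^ (2 * i)
      = ∑ i ∈ Finset.range (2 * n + 1), C (γ i) * X ^ i :=
    Polynomial.funext fun t => by simpa [eval_finsetSum] using h t
  have := congrArg (coeff · (2 * k)) hpoly
  simpa [finsetSum_coeff, coeff_C_mul_X_pow, hk, Nat.lt_succ_iff.2 hk,
    show 2 * k < 2 * n + 1 by omega] using this

lemma Function.Antiperiodic.intervalIntegral_add_two_mul_eq_zero {f : ℝ → ℝ} {c : ℝ}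
    (hf : Function.Antiperiodic f c) (t : ℝ) : ∫ x in t..t + 2 * c, f x = 0 := by
  have hper := hf.periodic_two_mul.intervalIntegral_add_eq (t + c) t
  have hshift : ∫ x in t..t + 2 * c, f (x + c) = ∫ x in t + c..t + c + 2 * c, f x := by
    rw [intervalIntegral.integral_comp_add_right]
    ring_nf
  simp only [hf _, intervalIntegral.integral_neg] at hshift
  linarith

lemma sq_intervalIntegral_le_intervalIntegral_sq {f : ℝ → ℝ} (hf : Continuous f) :
    (∫ x in (0:ℝ)..1, f x) ^ 2 ≤ ∫ x in (0:ℝ)..1, f x ^ 2 := by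
  set I := ∫ x in (0:ℝ)..1, f x
  have hvar : 0 ≤ ∫ x in (0:ℝ)..1, (f x - I) ^ 2 :=
    intervalIntegral.integral_nonneg zero_le_one fun _ _ => sq_nonneg _
  have hexpand : ∫ x in (0:ℝ)..1, (f x - I) ^ 2 = (∫ x in (0:ℝ)..1, f x ^ 2) - I ^ 2 := by
    simp only [sub_sq]
    have hint {g : ℝ → ℝ} (hg : Continuous g) : IntervalIntegrable g volume 0 1 :=
      hg.intervalIntegrable 0 1
    rw [intervalIntegral.integral_add (hint (by fun_prop)) (hint (by fun_prop)),
      intervalIntegral.integral_sub (hint (by fun_prop)) (hint (by fun_prop)),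
      intervalIntegral.integral_mul_const, intervalIntegral.integral_const_mul]
    simp only [intervalIntegral.integral_const]
    ring
  linarith

open Complex in
lemma norm_exp_mul_I_add_one (t : ℝ) : ‖exp (t * I) + 1‖ = |2 * Real.cos (t / 2)| := by
  have h : exp (t * I) + 1 = exp ((t / 2 : ℝ) * I) * ((2 * Real.cos (t / 2) : ℝ) : ℂ) := by
    push_cast
    rw [Complex.cos, mul_div_cancel₀ _ two_ne_zero, mul_add, ← Complex.exp_add,
      ← Complex.exp_add]
    ring_nf
    simp [add_comm]
  rw [h, norm_mul, norm_exp_ofReal_mul_I, one_mul, Complex.norm_real, Real.norm_eq_abs]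

open Complex in
lemma intervalIntegral_exp_two_pi_mul_I_int {k : ℤ} (hk : k ≠ 0) :
    ∫ y in (0:ℝ)..1, exp (2 * π * I * k * y) = 0 := by
  have hc : (2 * π * I * k : ℂ) ≠ 0 := by simp [hk, pi_ne_zero, I_ne_zero]
  rw [integral_exp_mul_complex hc]
  simp [mul_comm _ (k : ℂ), Complex.exp_int_mul_two_pi_mul_I]

open Complex in
lemma intervalIntegral_prod_exp_add_one (s : Finset ℕ) (hs : 0 ∉ s) (φ : ℕ → ℝ) :
    ∫ y in (0:ℝ)..1, ∏ j ∈ s, (exp ((4 * π * (φ j + j * y) : ℝ) * I) + 1) = 1 := by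
  have hmonomial (t : Finset ℕ) (y : ℝ) :
      ∏ j ∈ t, exp ((4 * π * (φ j + j * y) : ℝ) * I)
        = exp ((4 * π * ∑ j ∈ t, φ j : ℝ) * I)
          * exp (2 * π * I * ((2 * ∑ j ∈ t, j : ℕ) : ℤ) * y) := by
    rw [← Complex.exp_sum, ← Complex.exp_add]
    push_cast
    simp only [mul_add, add_mul, Finset.sum_add_distrib, Finset.mul_sum, Finset.sum_mul]
    congr 2
    exact Finset.sum_congr rfl fun j _ => by ring
  have hcont (t : Finset ℕ) :
      Continuous fun y : ℝ => ∏ j ∈ t, exp ((4 * π * (φ j + j * y) : ℝ) * I) := by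
    fun_prop
  simp only [Finset.prod_add, Finset.prod_const_one, mul_one]
  rw [intervalIntegral.integral_finsetSum fun t _ => (hcont t).intervalIntegrable 0 1,
    Finset.sum_eq_single ∅]
  · simp
  · intro t hts ht
    have hsum : 2 * ∑ j ∈ t, j ≠ 0 := by
      obtain ⟨j, hj⟩ := Finset.nonempty_iff_ne_empty.2 ht
      have : j ≠ 0 := fun h => hs (h ▸ Finset.mem_powerset.1 hts hj)
      simp only [ne_eq, mul_eq_zero, OfNat.ofNat_ne_zero, false_or, Finset.sum_eq_zero_iff,
        not_forall]
      exact ⟨j, hj, this⟩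
    simp only [hmonomial, intervalIntegral.integral_const_mul]
    rw [intervalIntegral_exp_two_pi_mul_I_int (by exact_mod_cast hsum), mul_zero]
  · simp

lemma one_le_intervalIntegral_sq_prod_two_cos (s : Finset ℕ) (hs : 0 ∉ s) (φ : ℕ → ℝ) :
    1 ≤ ∫ y in (0:ℝ)..1, (∏ j ∈ s, 2 * cos (2 * π * (φ j + j * y))) ^ 2 := by
  set f : ℝ → ℝ := fun y => ∏ j ∈ s, 2 * cos (2 * π * (φ j + j * y))
  have hnorm (y : ℝ) :
      ‖∏ j ∈ s, (Complex.exp ((4 * π * (φ j + j * y) : ℝ) * Complex.I) + 1)‖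
        = |f y| := by
    simp only [f, norm_prod, Finset.abs_prod, norm_exp_mul_I_add_one]
    exact Finset.prod_congr rfl fun j _ => by ring_nf
  have habs : 1 ≤ ∫ y in (0:ℝ)..1, |f y| := by
    calc (1 : ℝ)
        = ‖∫ y in (0:ℝ)..1,
            ∏ j ∈ s, (Complex.exp ((4 * π * (φ j + j * y) : ℝ) * Complex.I) + 1)‖ := by
          rw [intervalIntegral_prod_exp_add_one s hs, norm_one]
      _ ≤ _ := intervalIntegral.norm_integral_le_integral_norm zero_le_one
      _ = ∫ y in (0:ℝ)..1, |f y| := by simp only [hnorm]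
  calc (1 : ℝ) ≤ (∫ y in (0:ℝ)..1, |f y|) ^ 2 := one_le_pow₀ habs
    _ ≤ ∫ y in (0:ℝ)..1, |f y| ^ 2 := sq_intervalIntegral_le_intervalIntegral_sq (by fun_prop)
    _ = ∫ y in (0:ℝ)..1, f y ^ 2 := by simp only [sq_abs]

section TransferPoly

variable {R : Type*} [CommRing R]

-- `A_j` with `λ` replaced by the indeterminate `X` and `v_j(x, y)` by `w j`.
noncomputable def transferPoly (w : ℕ → R) (j : ℕ) : Matrix (Fin 2) (Fin 2) R[X] :=
  !![-(C (w j) * X), -1; 1, 0]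

noncomputable def transferPolyProd (w : ℕ → R) : ℕ → Matrix (Fin 2) (Fin 2) R[X]
  | 0 => 1
  | n + 1 => transferPoly w (n + 1) * transferPolyProd w n

variable (w : ℕ → R)

lemma transferPolyProd_succ_one (n : ℕ) (j : Fin 2) :
    transferPolyProd w (n + 1) 1 j = transferPolyProd w n 0 j := by
  simp [transferPolyProd, transferPoly, Matrix.mul_apply]

lemma transferPolyProd_succ_zero (n : ℕ) (j : Fin 2) :
    transferPolyProd w (n + 1) 0 j
      = -(C (w (n + 1)) * X) * transferPolyProd w n 0 j - transferPolyProd w n 1 j := by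
  simp [transferPolyProd, transferPoly, Matrix.mul_apply, sub_eq_add_neg]

lemma coeff_transferPolyProd_succ_zero (n k : ℕ) (j : Fin 2) :
    (transferPolyProd w (n + 1) 0 j).coeff (k + 1)
      = -w (n + 1) * (transferPolyProd w n 0 j).coeff k
        - (transferPolyProd w n 1 j).coeff (k + 1) := by
  rw [transferPolyProd_succ_zero, coeff_sub, neg_mul, coeff_neg, mul_assoc, coeff_C_mul,
    coeff_X_mul, neg_mul]

lemma natDegree_transferPolyProd_le (n : ℕ) :
    ∀ i j : Fin 2, (transferPolyProd w n i j).natDegree ≤ n - i - j := by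
  simp only [Fin.forall_fin_two, Fin.val_zero, Fin.val_one]
  induction n with
  | zero => simp [transferPolyProd]
  | succ n ih =>
    obtain ⟨⟨h00, h01⟩, h10, h11⟩ := ih
    have hX : (-(C (w (n + 1)) * X)).natDegree ≤ 1 := by
      simpa using natDegree_C_mul_X_pow_le (w (n + 1)) 1
    simp only [transferPolyProd_succ_one, transferPolyProd_succ_zero]
    refine ⟨⟨?_, ?_⟩, h00.trans (by omega), h01.trans (by omega)⟩
    · exact (natDegree_sub_le _ _).trans
        (max_le (natDegree_mul_le.trans (by omega)) (h10.trans (by omega)))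
    · rcases n with _ | n
      · simp [transferPolyProd]
      exact (natDegree_sub_le _ _).trans
        (max_le (natDegree_mul_le.trans (by omega)) (h11.trans (by omega)))

lemma coeff_transferPolyProd_top (n : ℕ) :
    (transferPolyProd w n 0 0).coeff n = ∏ j ∈ Finset.Icc 1 n, -w j := by
  induction n with
  | zero => simp [transferPolyProd]
  | succ n ih =>
    have hlow : (transferPolyProd w n 1 0).coeff (n + 1) = 0 :=
      coeff_eq_zero_of_natDegree_lt ((natDegree_transferPolyProd_le w n 1 0).trans_lt (by simp))
    rw [coeff_transferPolyProd_succ_zero, ih, hlow, Finset.prod_Icc_succ_top (by omega)]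
    ring

lemma transferPolyProd_map {S : Type*} [CommRing S] (f : R →+* S) (n : ℕ) :
    transferPolyProd (f ∘ w) n = (mapRingHom f).mapMatrix (transferPolyProd w n) := by
  induction n with
  | zero => simp [transferPolyProd]
  | succ n ih =>
    rw [transferPolyProd, transferPolyProd, map_mul, ih]
    congr 1
    ext i j
    fin_cases i <;> fin_cases j <;> simp [transferPoly]

lemma coeff_two_transferPolyProd_zero : (transferPolyProd w 2 0 0).coeff 0 = -1 := by
  rw [transferPolyProd_succ_zero, coeff_sub, transferPolyProd_succ_one]
  simp [transferPolyProd]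

def twistSign (n : ℕ) : R := ∏ j ∈ Finset.Icc 1 n, (-1) ^ j

lemma twistSign_succ (n : ℕ) : (twistSign (n + 1) : R) = (-1) ^ (n + 1) * twistSign n := by
  rw [twistSign, Finset.prod_Icc_succ_top (by omega), mul_comm, twistSign]

lemma twistSign_add_two (n : ℕ) : (twistSign (n + 2) : R) = -twistSign n := by
  rw [twistSign_succ, twistSign_succ, ← mul_assoc, ← pow_add,
    Odd.neg_one_pow ⟨n + 1, by ring⟩, neg_one_mul]

lemma twistSign_mul_self (n : ℕ) : (twistSign n : R) * twistSign n = 1 := by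
  simp [twistSign, ← Finset.prod_mul_distrib, ← mul_pow]

lemma coeff_transferPolyProd_top_twist (n : ℕ) :
    (transferPolyProd (fun j => (-1) ^ j * w j) n 0 0).coeff n
      = twistSign n * (transferPolyProd w n 0 0).coeff n := by
  simp only [coeff_transferPolyProd_top, twistSign, ← Finset.prod_mul_distrib, mul_neg]

lemma coeff_transferPolyProd_subleading_twist (m : ℕ) :
    (transferPolyProd (fun j => (-1) ^ j * w j) (m + 2) 0 0).coeff m
      = -twistSign (m + 2) * (transferPolyProd w (m + 2) 0 0).coeff m := by
  induction m with
  | zero =>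
    rw [coeff_two_transferPolyProd_zero, coeff_two_transferPolyProd_zero, twistSign_add_two]
    simp [twistSign]
  | succ m ih =>
    simp only [coeff_transferPolyProd_succ_zero _ (m + 2), transferPolyProd_succ_one, ih,
      coeff_transferPolyProd_top_twist]
    linear_combination
      (-w (m + 3) * (transferPolyProd w (m + 2) 0 0).coeff m) * twistSign_succ (R := R) (m + 2)
        - (transferPolyProd w (m + 1) 0 0).coeff (m + 1) * twistSign_add_two (R := R) (m + 1)

noncomputable def transferPolyNormSq (w : ℕ → R) (n : ℕ) : R[X] :=
  ∑ i, ∑ j, transferPolyProd w n i j ^ 2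

lemma natDegree_transferPolyNormSq_le (n : ℕ) : (transferPolyNormSq w n).natDegree ≤ 2 * n :=
  natDegree_sum_le_of_forall_le _ _ fun i _ => natDegree_sum_le_of_forall_le _ _ fun j _ =>
    natDegree_pow_le.trans (Nat.mul_le_mul_left 2
      ((natDegree_transferPolyProd_le w n i j).trans (by omega)))

lemma coeff_zero_transferPolyNormSq_one : (transferPolyNormSq w 1).coeff 0 = 2 := by
  simp [transferPolyNormSq, Fin.sum_univ_two, transferPolyProd, transferPoly, sq]
  norm_num

lemma coeff_transferPolyNormSq_top (n : ℕ) :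
    (transferPolyNormSq w (n + 1)).coeff (2 * (n + 1))
      = (transferPolyProd w (n + 1) 0 0).coeff (n + 1) ^ 2 := by
  have hdeg := natDegree_transferPolyProd_le w (n + 1)
  have hsq (i j : Fin 2) := coeff_pow_of_natDegree_le (m := 2)
    ((hdeg i j).trans (by omega) : _ ≤ n + 1)
  have hlow (i j : Fin 2) (hij : (i, j) ≠ (0, 0)) :
      (transferPolyProd w (n + 1) i j).coeff (n + 1) = 0 := by
    apply coeff_eq_zero_of_natDegree_lt
    have := hdeg i j
    fin_cases i <;> fin_cases j <;> simp at hij this ⊢ <;> omega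
  simp [transferPolyNormSq, Fin.sum_univ_two, hsq, hlow]

end TransferPoly

section Ordered

variable {R : Type*} [CommRing R] [LinearOrder R] [IsStrictOrderedRing R] (w : ℕ → R)

lemma coeff_transferPolyNormSq_subleading_ge (m : ℕ) :
    2 * ((transferPolyProd w (m + 2) 0 0).coeff (m + 2) * (transferPolyProd w (m + 2) 0 0).coeff m)
        + (transferPolyProd w (m + 1) 0 0).coeff (m + 1) ^ 2
      ≤ (transferPolyNormSq w (m + 2)).coeff (2 * (m + 1)) := by
  have hdeg := natDegree_transferPolyProd_le w (m + 2)
  have hsq (i j : Fin 2) (hij : (i, j) ≠ (0, 0)) := coeff_pow_of_natDegree_le (m := 2)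
    (p := transferPolyProd w (m + 2) i j) (n := m + 1) (by
      have := hdeg i j
      fin_cases i <;> fin_cases j <;> simp at hij this ⊢ <;> omega)
  have h00 := coeff_sq_of_natDegree_le_add_two (by simpa using hdeg 0 0)
  simp only [transferPolyNormSq, Fin.sum_univ_two, coeff_add]
  rw [h00, hsq 0 1 (by simp), hsq 1 0 (by simp), hsq 1 1 (by simp), transferPolyProd_succ_one]
  linarith [sq_nonneg ((transferPolyProd w (m + 2) 0 0).coeff (m + 1)),
    sq_nonneg ((transferPolyProd w (m + 2) 0 1).coeff (m + 1)),
    sq_nonneg ((transferPolyProd w (m + 2) 1 1).coeff (m + 1))]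

end Ordered

section Continuity

variable {Z R : Type*} [TopologicalSpace Z] [CommRing R] [TopologicalSpace R]
  [IsTopologicalRing R] {w : ℕ → Z → R}

lemma continuous_coeff_transferPolyProd (hw : ∀ j, Continuous (w j)) (n k : ℕ) (i j : Fin 2) :
    Continuous fun z => (transferPolyProd (w · z) n i j).coeff k := by
  -- Run the recursion over the ring `C(Z, R)` and evaluate at `z` afterwards.
  let W : ℕ → C(Z, R) := fun j => ⟨w j, hw j⟩
  have hW (z : Z) :
      (transferPolyProd (w · z) n i j).coeff k = (transferPolyProd W n i j).coeff k z := by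
    rw [show (w · z) = (Pi.evalRingHom (fun _ : Z => R) z).comp ContinuousMap.coeFnRingHom ∘ W
      from rfl, transferPolyProd_map]
    simp
  simpa only [hW] using ((transferPolyProd W n i j).coeff k).continuous

lemma continuous_coeff_transferPolyNormSq (hw : ∀ j, Continuous (w j)) (n k : ℕ) :
    Continuous fun z => (transferPolyNormSq (w · z) n).coeff k := by
  simp only [transferPolyNormSq, finsetSum_coeff, sq, coeff_mul]
  exact continuous_finsetSum _ fun i _ => continuous_finsetSum _ fun j _ =>
    continuous_finsetSum _ fun q _ => (continuous_coeff_transferPolyProd hw n q.1 i j).mul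
      (continuous_coeff_transferPolyProd hw n q.2 i j)

end Continuity

section SkewShift

variable (ω : ℝ)

lemma continuous_v {Z : Type*} [TopologicalSpace Z] {f g : Z → ℝ} (hf : Continuous f)
    (hg : Continuous g) (j : ℕ) : Continuous fun z => v ω j (f z) (g z) := by
  unfold v
  fun_prop

lemma v_add_half (j : ℕ) (x y : ℝ) : v ω j x (y + 1 / 2) = (-1) ^ j * v ω j x y := by
  have h : 2 * π * (j * (j - 1) / 2 * ω + j * (y + 1 / 2) + x)
      = 2 * π * (j * (j - 1) / 2 * ω + j * y + x) + j * π := by ring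
  rw [v, v, h, Real.cos_add_nat_mul_pi]
  ring

lemma M_eq_mapMatrix_transferPolyProd (lam : ℝ) (n : ℕ) (x y : ℝ) :
    M ω lam n x y = (evalRingHom lam).mapMatrix (transferPolyProd (v ω · x y) n) := by
  induction n with
  | zero => simp [M, transferPolyProd]
  | succ n ih =>
    rw [M, transferPolyProd, map_mul, ih]
    congr 1
    ext i j
    fin_cases i <;> fin_cases j <;> simp [A, transferPoly, mul_comm lam]

lemma trace_transpose_M_mul_M (lam : ℝ) (n : ℕ) (x y : ℝ) :
    ((M ω lam n x y)ᵀ * M ω lam n x y).trace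
      = (transferPolyNormSq (v ω · x y) n).eval lam := by
  simp [Matrix.trace_transpose_mul_self, M_eq_mapMatrix_transferPolyProd, transferPolyNormSq]

noncomputable def coeffP (n k : ℕ) : ℝ :=
  ∫ x in (0:ℝ)..1, ∫ y in (0:ℝ)..1, (transferPolyNormSq (v ω · x y) n).coeff k

lemma P_eq_sum_coeffP (n : ℕ) (lam : ℝ) :
    P ω n lam = ∑ k ∈ Finset.range (2 * n + 1), coeffP ω n k * lam ^ k := by
  simp only [P, trace_transpose_M_mul_M]
  exact intervalIntegral_intervalIntegral_eval
    (continuous_coeff_transferPolyNormSq (continuous_v ω continuous_fst continuous_snd) n)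
    (fun _ _ => natDegree_transferPolyNormSq_le _ n) 0 1 0 1 lam

lemma le_coeffP {c : ℝ} {n k : ℕ}
    (h : ∀ x, c ≤ ∫ y in (0:ℝ)..1, (transferPolyNormSq (v ω · x y) n).coeff k) :
    c ≤ coeffP ω n k := by
  have hcont :
      Continuous fun x => ∫ y in (0:ℝ)..1, (transferPolyNormSq (v ω · x y) n).coeff k :=
    intervalIntegral.continuous_parametric_intervalIntegral_of_continuous'
      (f := fun x y => (transferPolyNormSq (v ω · x y) n).coeff k)
      (continuous_coeff_transferPolyNormSq (continuous_v ω continuous_fst continuous_snd) n k) 0 1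
  calc c = ∫ _ in (0:ℝ)..1, c := by simp
    _ ≤ coeffP ω n k := intervalIntegral.integral_mono_on zero_le_one intervalIntegrable_const
        (hcont.intervalIntegrable 0 1) fun x _ => h x

lemma one_le_intervalIntegral_sq_coeff_top (n : ℕ) (x : ℝ) :
    1 ≤ ∫ y in (0:ℝ)..1, (transferPolyProd (v ω · x y) n 0 0).coeff n ^ 2 := by
  have h (y : ℝ) : (transferPolyProd (v ω · x y) n 0 0).coeff n ^ 2
      = (∏ j ∈ Finset.Icc 1 n, 2 * cos (2 * π * (j * (j - 1) / 2 * ω + x + j * y))) ^ 2 := by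
    rw [coeff_transferPolyProd_top, ← Finset.prod_pow, ← Finset.prod_pow]
    refine Finset.prod_congr rfl fun j _ => ?_
    rw [neg_sq, v]
    ring_nf
  simp only [h]
  exact one_le_intervalIntegral_sq_prod_two_cos _ (by simp) _

lemma intervalIntegral_coeff_top_mul_coeff_subleading (m : ℕ) (x : ℝ) :
    ∫ y in (0:ℝ)..1, (transferPolyProd (v ω · x y) (m + 2) 0 0).coeff (m + 2)
      * (transferPolyProd (v ω · x y) (m + 2) 0 0).coeff m = 0 := by
  set p : ℝ → ℝ[X] := fun y => transferPolyProd (v ω · x y) (m + 2) 0 0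
  have hanti : Function.Antiperiodic (fun y => (p y).coeff (m + 2) * (p y).coeff m) (1 / 2) := by
    intro y
    have hw : (v ω · x (y + 1 / 2)) = fun j => (-1) ^ j * v ω j x y :=
      funext fun j => v_add_half ω j x y
    simp only [p, hw, coeff_transferPolyProd_top_twist, coeff_transferPolyProd_subleading_twist]
    linear_combination
      (-(p y).coeff (m + 2) * (p y).coeff m) * twistSign_mul_self (R := ℝ) (m + 2)
  simpa using hanti.intervalIntegral_add_two_mul_eq_zero 0

lemma one_le_intervalIntegral_coeff_subleading (m : ℕ) (x : ℝ) :
    1 ≤ ∫ y in (0:ℝ)..1, (transferPolyNormSq (v ω · x y) (m + 2)).coeff (2 * (m + 1)) := by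
  have hv (j : ℕ) : Continuous fun y => v ω j x y :=
    continuous_v ω continuous_const continuous_id j
  have hc (n k : ℕ) : Continuous fun y => (transferPolyProd (v ω · x y) n 0 0).coeff k :=
    continuous_coeff_transferPolyProd hv n k 0 0
  set p : ℕ → ℝ → ℝ[X] := fun n y => transferPolyProd (v ω · x y) n 0 0
  have hcross : Continuous fun y => 2 * ((p (m + 2) y).coeff (m + 2) * (p (m + 2) y).coeff m) := by
    fun_prop
  have htop : Continuous fun y => (p (m + 1) y).coeff (m + 1) ^ 2 := by
    fun_prop
  calc (1 : ℝ) ≤ ∫ y in (0:ℝ)..1, (p (m + 1) y).coeff (m + 1) ^ 2 :=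
        one_le_intervalIntegral_sq_coeff_top ω (m + 1) x
    _ = ∫ y in (0:ℝ)..1, 2 * ((p (m + 2) y).coeff (m + 2) * (p (m + 2) y).coeff m)
          + (p (m + 1) y).coeff (m + 1) ^ 2 := by
        rw [intervalIntegral.integral_add (hcross.intervalIntegrable 0 1)
          (htop.intervalIntegrable 0 1), intervalIntegral.integral_const_mul,
          intervalIntegral_coeff_top_mul_coeff_subleading, mul_zero, zero_add]
    _ ≤ _ := intervalIntegral.integral_mono_on zero_le_one
        ((hcross.add htop).intervalIntegrable 0 1)
        ((continuous_coeff_transferPolyNormSq hv _ _).intervalIntegrable 0 1)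
        fun y _ => coeff_transferPolyNormSq_subleading_ge _ m

lemma one_le_coeffP_top (m : ℕ) : 1 ≤ coeffP ω (m + 1) (2 * (m + 1)) :=
  le_coeffP ω fun x => by
    simpa only [coeff_transferPolyNormSq_top] using
      one_le_intervalIntegral_sq_coeff_top ω (m + 1) x

lemma one_le_coeffP_subleading (m : ℕ) : 1 ≤ coeffP ω (m + 1) (2 * m) := by
  rcases m with _ | m
  · exact le_coeffP ω fun x => by norm_num [coeff_zero_transferPolyNormSq_one]
  · exact le_coeffP ω (one_le_intervalIntegral_coeff_subleading ω m)

end SkewShift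

/-- The top coefficients of `P_n` satisfy `α_{2n} ≥ c₁ⁿ` and `α_{2n-2} ≥ c₂ⁿ` for
universal constants `c₁, c₂ > 0` (here `α k` denotes the coefficient `α_{2k}`). -/
theorem stmt_3 :
    ∃ c₁ > (0 : ℝ), ∃ c₂ > (0 : ℝ),
      ∀ (ω : ℝ) (n : ℕ), 1 ≤ n →
        ∀ α : ℕ → ℝ,
          (∀ lam' : ℝ, P ω n lam' = ∑ k ∈ Finset.range (n + 1), α k * lam' ^ (2 * k)) →
          c₁ ^ n ≤ α n ∧ c₂ ^ n ≤ α (n - 1) := by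
  refine ⟨1, one_pos, 1, one_pos, fun ω n hn α hα => ?_⟩
  obtain ⟨m, rfl⟩ := Nat.exists_eq_add_of_le' hn
  have hcoeff {k : ℕ} (hk : k ≤ m + 1) : α k = coeffP ω (m + 1) (2 * k) :=
    eq_of_forall_sum_mul_pow_two_mul_eq (fun t => (hα t).symm.trans (P_eq_sum_coeffP ω _ t)) hk
  rw [hcoeff le_rfl, Nat.add_sub_cancel, hcoeff (by omega)]
  simpa only [one_pow] using ⟨one_le_coeffP_top ω m, one_le_coeffP_subleading ω m⟩
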